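/- Let 1/2 < α < 2/3 and consider an instance of the FSSP with two agents and separate item sets in which every item weight is at most α. Then every Kalai–Smorodinski fair solution x_KS satisfies z* − z(x_KS) ≤ (1/2) · z*. -/
import Mathlib


/-! Definitions for the Fair Subset Sum Problem (FSSP) with two agents `A` and `B`
owning separate item sets with weights `a : Fin n → ℝ` and `b : Fin m → ℝ`.
A solution is a pair of index subsets; feasibility means the total selected
weight does not exceed the capacity `1`. -/

/-- Total weight of the items of `S`. -/
noncomputable def sumw {n : ℕ} (a : Fin n → ℝ) (S : Finset (Fin n)) : ℝ := ∑ i ∈ S, a i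

/-- A feasible solution of FSSP with separate item sets. -/
def Feas {n m : ℕ} (a : Fin n → ℝ) (b : Fin m → ℝ)
    (x : Finset (Fin n) × Finset (Fin m)) : Prop :=
  sumw a x.1 + sumw b x.2 ≤ 1

/-- Social utility `z(x) = a(x) + b(x)`. -/
noncomputable def zv {n m : ℕ} (a : Fin n → ℝ) (b : Fin m → ℝ)
    (x : Finset (Fin n) × Finset (Fin m)) : ℝ :=
  sumw a x.1 + sumw b x.2

/-- Pareto efficient feasible solution. -/
def Pareto {n m : ℕ} (a : Fin n → ℝ) (b : Fin m → ℝ)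
    (x : Finset (Fin n) × Finset (Fin m)) : Prop :=
  Feas a b x ∧ ¬ ∃ y, Feas a b y ∧ sumw a x.1 ≤ sumw a y.1 ∧ sumw b x.2 ≤ sumw b y.2 ∧
    (sumw a x.1 < sumw a y.1 ∨ sumw b x.2 < sumw b y.2)

/-- System optimum: a feasible solution maximizing the social utility. -/
def SysOpt {n m : ℕ} (a : Fin n → ℝ) (b : Fin m → ℝ)
    (x : Finset (Fin n) × Finset (Fin m)) : Prop :=
  Feas a b x ∧ ∀ y, Feas a b y → zv a b y ≤ zv a b x

/-- Maximin fair solution: Pareto efficient and maximizing `min{a(x), b(x)}`. -/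
def Maximin {n m : ℕ} (a : Fin n → ℝ) (b : Fin m → ℝ)
    (x : Finset (Fin n) × Finset (Fin m)) : Prop :=
  Pareto a b x ∧ ∀ y, Feas a b y →
    min (sumw a y.1) (sumw b y.2) ≤ min (sumw a x.1) (sumw b x.2)

/-- Proportional fair solution. -/
def PropFair {n m : ℕ} (a : Fin n → ℝ) (b : Fin m → ℝ)
    (x : Finset (Fin n) × Finset (Fin m)) : Prop :=
  Feas a b x ∧ 0 < sumw a x.1 ∧ 0 < sumw b x.2 ∧
    ∀ y, Feas a b y → sumw a y.1 / sumw a x.1 + sumw b y.2 / sumw b x.2 ≤ 2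

/-- Kalai–Smorodinski fair solution: Pareto efficient and maximizing
`min{a(x)/â, b(x)/b̂}`, where `â` and `b̂` are the (positive) maximal utilities
each agent can obtain over all feasible solutions. -/
def KSFair {n m : ℕ} (a : Fin n → ℝ) (b : Fin m → ℝ)
    (x : Finset (Fin n) × Finset (Fin m)) : Prop :=
  Pareto a b x ∧ ∃ ahat bhat : ℝ, 0 < ahat ∧ 0 < bhat ∧
    IsGreatest {v | ∃ y, Feas a b y ∧ sumw a y.1 = v} ahat ∧
    IsGreatest {v | ∃ y, Feas a b y ∧ sumw b y.2 = v} bhat ∧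
    ∀ y, Feas a b y →
      min (sumw a y.1 / ahat) (sumw b y.2 / bhat) ≤
        min (sumw a x.1 / ahat) (sumw b x.2 / bhat)

/-- A valid FSSP instance with separate item sets in which every item weight is
nonnegative and at most `α`, and the total weight exceeds the capacity `1`. -/
def ValidInst {n m : ℕ} (a : Fin n → ℝ) (b : Fin m → ℝ) (α : ℝ) : Prop :=
  (∀ i, 0 ≤ a i) ∧ (∀ i, 0 ≤ b i) ∧ (∀ i, a i ≤ α) ∧ (∀ i, b i ≤ α) ∧
    1 < (∑ i, a i) + (∑ i, b i)

section Aux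

variable {n m : ℕ}

lemma sumw_nonneg {a : Fin n → ℝ} (ha : ∀ i, 0 ≤ a i) (S : Finset (Fin n)) :
    0 ≤ sumw a S := Finset.sum_nonneg fun i _ => ha i

lemma sumw_mono {a : Fin n → ℝ} (ha : ∀ i, 0 ≤ a i) {S T : Finset (Fin n)}
    (h : S ⊆ T) : sumw a S ≤ sumw a T :=
  Finset.sum_le_sum_of_subset_of_nonneg h fun i _ _ => ha i

lemma sumw_le_all {a : Fin n → ℝ} (ha : ∀ i, 0 ≤ a i) {T : Finset (Fin n)}
    (hT : ∀ i, i ∉ T → a i = 0) (S : Finset (Fin n)) : sumw a S ≤ sumw a T := by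
  have h1 : sumw a S ≤ sumw a (S ∪ T) := sumw_mono ha Finset.subset_union_left
  have h2 : sumw a (S ∪ T) = sumw a T :=
    (Finset.sum_subset Finset.subset_union_right fun i _ hi => hT i hi).symm
  linarith

lemma Feas_swap (a : Fin n → ℝ) (b : Fin m → ℝ) (x : Finset (Fin n) × Finset (Fin m)) :
    Feas b a (x.2, x.1) ↔ Feas a b x := by
  unfold Feas
  constructor <;> intro h <;> linarith

lemma zv_swap (a : Fin n → ℝ) (b : Fin m → ℝ) (x : Finset (Fin n) × Finset (Fin m)) :
    zv b a (x.2, x.1) = zv a b x := add_comm _ _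

lemma Pareto_swap {a : Fin n → ℝ} {b : Fin m → ℝ} {x : Finset (Fin n) × Finset (Fin m)}
    (h : Pareto a b x) : Pareto b a (x.2, x.1) := by
  refine ⟨(Feas_swap a b x).mpr h.1, ?_⟩
  rintro ⟨y, hyf, h1, h2, h3⟩
  exact h.2 ⟨(y.2, y.1), (Feas_swap b a y).mpr hyf, h2, h1, h3.symm⟩

lemma SysOpt_swap {a : Fin n → ℝ} {b : Fin m → ℝ} {x : Finset (Fin n) × Finset (Fin m)}
    (h : SysOpt a b x) : SysOpt b a (x.2, x.1) := by
  refine ⟨(Feas_swap a b x).mpr h.1, fun y hy => ?_⟩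
  have := h.2 (y.2, y.1) ((Feas_swap b a y).mpr hy)
  unfold zv at this ⊢
  linarith

lemma KSFair_swap {a : Fin n → ℝ} {b : Fin m → ℝ} {x : Finset (Fin n) × Finset (Fin m)}
    (h : KSFair a b x) : KSFair b a (x.2, x.1) := by
  obtain ⟨hP, ah, bh, hah, hbh, hagr, hbgr, hmin⟩ := h
  refine ⟨Pareto_swap hP, bh, ah, hbh, hah, ?_, ?_, ?_⟩
  · have hset : {v | ∃ y : Finset (Fin m) × Finset (Fin n), Feas b a y ∧ sumw b y.1 = v}
        = {v | ∃ y : Finset (Fin n) × Finset (Fin m), Feas a b y ∧ sumw b y.2 = v} := by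
      ext v
      constructor
      · rintro ⟨y, hyf, hyv⟩
        exact ⟨(y.2, y.1), (Feas_swap b a y).mpr hyf, hyv⟩
      · rintro ⟨y, hyf, hyv⟩
        exact ⟨(y.2, y.1), (Feas_swap a b y).mpr hyf, hyv⟩
    rw [hset]; exact hbgr
  · have hset : {v | ∃ y : Finset (Fin m) × Finset (Fin n), Feas b a y ∧ sumw a y.2 = v}
        = {v | ∃ y : Finset (Fin n) × Finset (Fin m), Feas a b y ∧ sumw a y.1 = v} := by
      ext v
      constructor
      · rintro ⟨y, hyf, hyv⟩
        exact ⟨(y.2, y.1), (Feas_swap b a y).mpr hyf, hyv⟩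
      · rintro ⟨y, hyf, hyv⟩
        exact ⟨(y.2, y.1), (Feas_swap a b y).mpr hyf, hyv⟩
    rw [hset]; exact hagr
  · intro y hy
    have := hmin (y.2, y.1) ((Feas_swap b a y).mpr hy)
    rw [min_comm (sumw b y.1 / bh), min_comm (sumw b x.2 / bh)]
    exact this

/-- Any unselected positive item of a Pareto efficient solution is heavy. -/
lemma unsel_big {a : Fin n → ℝ} {b : Fin m → ℝ} {x : Finset (Fin n) × Finset (Fin m)}
    (hPar : Pareto a b x) {i : Fin n} (hi : i ∉ x.1) (hip : 0 < a i) :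
    1 - (sumw a x.1 + sumw b x.2) < a i := by
  by_contra h
  push_neg at h
  apply hPar.2
  have hins : sumw a (insert i x.1) = a i + sumw a x.1 := Finset.sum_insert hi
  refine ⟨(insert i x.1, x.2), ?_, ?_, le_rfl, Or.inl ?_⟩
  · show sumw a (insert i x.1) + sumw b x.2 ≤ 1
    rw [hins]; linarith
  · show sumw a x.1 ≤ sumw a (insert i x.1)
    rw [hins]; linarith
  · show sumw a x.1 < sumw a (insert i x.1)
    rw [hins]; linarith

/-- If `z(x) < 1/2` and agent A has an unselected positive item,
then `b(x) > 1 - α`. -/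
lemma unsel_forces {α : ℝ} {a : Fin n → ℝ} {b : Fin m → ℝ}
    {x : Finset (Fin n) × Finset (Fin m)}
    (ha0 : ∀ i, 0 ≤ a i) (hb0 : ∀ j, 0 ≤ b j) (haα : ∀ i, a i ≤ α)
    (hPar : Pareto a b x) (hz : sumw a x.1 + sumw b x.2 < 1/2)
    {i : Fin n} (hi : i ∉ x.1) (hip : 0 < a i) :
    1 - α < sumw b x.2 := by
  have hs0 : 0 ≤ sumw a x.1 := sumw_nonneg ha0 _
  have ht0 : 0 ≤ sumw b x.2 := sumw_nonneg hb0 _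
  have hbig := unsel_big hPar hi hip
  have hsing : sumw a ({i} : Finset (Fin n)) = a i := Finset.sum_singleton _ _
  have hnf : ¬ Feas a b ({i}, x.2) := by
    intro hf
    apply hPar.2
    refine ⟨({i}, x.2), hf, ?_, le_rfl, Or.inl ?_⟩
    · show sumw a x.1 ≤ sumw a {i}
      rw [hsing]; linarith
    · show sumw a x.1 < sumw a {i}
      rw [hsing]; linarith
  unfold Feas at hnf
  push_neg at hnf
  rw [hsing] at hnf
  have := haα i
  linarith

/-- Main case: `z(xKS) < 1/2`, A has an unselected positive item and every
unselected item of B has weight zero. -/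
lemma caseA {α : ℝ} (hα0 : 1/2 < α) (hα1 : α < 2/3)
    {a : Fin n → ℝ} {b : Fin m → ℝ}
    (ha0 : ∀ i, 0 ≤ a i) (hb0 : ∀ j, 0 ≤ b j) (haα : ∀ i, a i ≤ α)
    {xopt : Finset (Fin n) × Finset (Fin m)} (hopt : SysOpt a b xopt)
    {x : Finset (Fin n) × Finset (Fin m)} (hKS : KSFair a b x)
    (hz : sumw a x.1 + sumw b x.2 < 1/2)
    {i : Fin n} (hi : i ∉ x.1) (hip : 0 < a i)
    (hUB : ∀ j, j ∉ x.2 → b j = 0) :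
    sumw a xopt.1 + sumw b xopt.2 ≤ 2 * (sumw a x.1 + sumw b x.2) := by
  obtain ⟨hPar, ahat, bhat, hahat, hbhat, hagr, hbgr, hmin⟩ := hKS
  have hs0 : 0 ≤ sumw a x.1 := sumw_nonneg ha0 _
  have ht0 : 0 ≤ sumw b x.2 := sumw_nonneg hb0 _
  have hA0 : 0 ≤ sumw a xopt.1 := sumw_nonneg ha0 _
  have hB0 : 0 ≤ sumw b xopt.2 := sumw_nonneg hb0 _
  have hfopt : sumw a xopt.1 + sumw b xopt.2 ≤ 1 := hopt.1
  have hbig := unsel_big hPar hi hip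
  have haiα := haα i
  have htα : 1 - α < sumw b x.2 := unsel_forces ha0 hb0 haα hPar hz hi hip
  have htpos : 0 < sumw b x.2 := by linarith
  -- bhat = b(x)
  have hbt : bhat = sumw b x.2 := by
    refine le_antisymm ?_ (hbgr.2 ⟨x, hPar.1, rfl⟩)
    obtain ⟨y, hyf, hyv⟩ := hbgr.1
    rw [← hyv]
    exact sumw_le_all hb0 hUB y.2
  -- a i ≤ ahat
  have hfi : Feas a b ({i}, (∅ : Finset (Fin m))) := by
    show sumw a {i} + sumw b ∅ ≤ 1
    rw [show sumw a {i} = a i from Finset.sum_singleton _ _,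
      show sumw b (∅ : Finset (Fin m)) = 0 from Finset.sum_empty]
    linarith
  have hai_ahat : a i ≤ ahat := hagr.2 ⟨({i}, ∅), hfi, Finset.sum_singleton _ _⟩
  have ht_ahat : sumw b x.2 ≤ ahat := by linarith
  -- b* ≤ b(x)
  have hbstar : sumw b xopt.2 ≤ sumw b x.2 := sumw_le_all hb0 hUB xopt.2
  -- KS inequality at xopt
  have hKSopt := hmin xopt hopt.1
  have hmle : min (sumw a xopt.1 / ahat) (sumw b xopt.2 / bhat)
      ≤ sumw a x.1 / ahat := le_trans hKSopt (min_le_left _ _)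
  rcases min_le_iff.mp hmle with h | h
  · -- a* ≤ a(x)
    have : sumw a xopt.1 ≤ sumw a x.1 := by
      have := (div_le_div_iff₀ hahat hahat).mp h
      nlinarith
    linarith
  · -- b* ≤ s·t/ahat ≤ s
    rw [hbt] at h
    have h2 : sumw b xopt.2 * ahat ≤ sumw a x.1 * sumw b x.2 :=
      (div_le_div_iff₀ htpos hahat).mp h
    have hbs : sumw b xopt.2 ≤ sumw a x.1 := by nlinarith
    -- a* ≤ a(x) + α
    have hsplit : sumw a (xopt.1 ∩ x.1) + sumw a (xopt.1 \ x.1) = sumw a xopt.1 :=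
      Finset.sum_inter_add_sum_sdiff _ _ _
    have h4 : sumw a (xopt.1 ∩ x.1) ≤ sumw a x.1 :=
      sumw_mono ha0 Finset.inter_subset_right
    have h5 : sumw a (xopt.1 \ x.1) ≤ α := by
      by_contra h5
      push_neg at h5
      have hD0 : 0 < sumw a (xopt.1 \ x.1) := by linarith
      have hex : ∃ j ∈ xopt.1 \ x.1, 0 < a j := by
        by_contra he
        push_neg at he
        have : sumw a (xopt.1 \ x.1) ≤ 0 :=
          Finset.sum_nonpos fun j hj => (he j hj)
        linarith
      obtain ⟨j, hjD, hj⟩ := hex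
      have hjx : j ∉ x.1 := (Finset.mem_sdiff.mp hjD).2
      have hja := unsel_big hPar hjx hj
      have hsum : a j + sumw a ((xopt.1 \ x.1).erase j) = sumw a (xopt.1 \ x.1) :=
        Finset.add_sum_erase _ _ hjD
      have hjα := haα j
      have hE0 : 0 < sumw a ((xopt.1 \ x.1).erase j) := by linarith
      have hex2 : ∃ k ∈ (xopt.1 \ x.1).erase j, 0 < a k := by
        by_contra he
        push_neg at he
        have : sumw a ((xopt.1 \ x.1).erase j) ≤ 0 :=
          Finset.sum_nonpos fun k hk => (he k hk)
        linarith
      obtain ⟨k, hkE, hk⟩ := hex2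
      have hkx : k ∉ x.1 := (Finset.mem_sdiff.mp (Finset.mem_of_mem_erase hkE)).2
      have hka := unsel_big hPar hkx hk
      have hkle : a k ≤ sumw a ((xopt.1 \ x.1).erase j) :=
        Finset.single_le_sum (fun l _ => ha0 l) hkE
      have hDle : sumw a (xopt.1 \ x.1) ≤ sumw a xopt.1 :=
        sumw_mono ha0 (Finset.sdiff_subset)
      linarith
    -- conclude: z* ≤ a(x) + α + a(x) ≤ 2 a(x) + 2 b(x)
    linarith

end Aux

/-- For `1/2 < α < 2/3`, every Kalai–Smorodinski fair solution of an FSSP instance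
with separate item sets and item weights at most `α` satisfies
`z* - z(x_KS) ≤ (1/2) · z*`. -/
theorem pof_ks_medium_alpha (α : ℝ) (hα0 : 1/2 < α) (hα1 : α < 2/3)
    {n m : ℕ} (a : Fin n → ℝ) (b : Fin m → ℝ) (hinst : ValidInst a b α)
    (xopt : Finset (Fin n) × Finset (Fin m)) (hopt : SysOpt a b xopt)
    (xKS : Finset (Fin n) × Finset (Fin m)) (hKS : KSFair a b xKS) :
    zv a b xopt - zv a b xKS ≤ (1/2) * zv a b xopt := by
  obtain ⟨ha0, hb0, haα, hbα, htot⟩ := hinst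
  have hfopt : sumw a xopt.1 + sumw b xopt.2 ≤ 1 := hopt.1
  have hs0 : 0 ≤ sumw a xKS.1 := sumw_nonneg ha0 _
  have ht0 : 0 ≤ sumw b xKS.2 := sumw_nonneg hb0 _
  suffices h : sumw a xopt.1 + sumw b xopt.2 ≤ 2 * (sumw a xKS.1 + sumw b xKS.2) by
    unfold zv
    linarith
  by_cases hz : 1/2 ≤ sumw a xKS.1 + sumw b xKS.2
  · linarith
  push_neg at hz
  by_cases hUA : ∃ i, i ∉ xKS.1 ∧ 0 < a i
  · obtain ⟨i, hi, hip⟩ := hUA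
    by_cases hUB : ∃ j, j ∉ xKS.2 ∧ 0 < b j
    · -- both sides have unselected positive items: contradiction with z < 1/2
      obtain ⟨j, hj, hjp⟩ := hUB
      have h1 : 1 - α < sumw b xKS.2 :=
        unsel_forces ha0 hb0 haα hKS.1 hz hi hip
      have hswz : sumw b xKS.2 + sumw a xKS.1 < 1/2 := by linarith
      have h2 : 1 - α < sumw a xKS.1 :=
        unsel_forces hb0 ha0 hbα (Pareto_swap hKS.1) hswz hj hjp
      linarith
    · -- only A side: main case
      push_neg at hUB
      have hUB' : ∀ j, j ∉ xKS.2 → b j = 0 := fun j hj =>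
        le_antisymm ((hUB j hj)) (hb0 j)
      exact caseA hα0 hα1 ha0 hb0 haα hopt hKS hz hi hip hUB'
  · push_neg at hUA
    have hUA' : ∀ i, i ∉ xKS.1 → a i = 0 := fun i hi =>
      le_antisymm ((hUA i hi)) (ha0 i)
    by_cases hUB : ∃ j, j ∉ xKS.2 ∧ 0 < b j
    · -- only B side: symmetric main case
      obtain ⟨j, hj, hjp⟩ := hUB
      have hswz : sumw b xKS.2 + sumw a xKS.1 < 1/2 := by linarith
      have := caseA hα0 hα1 hb0 ha0 hbα (SysOpt_swap hopt) (KSFair_swap hKS)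
        hswz hj hjp hUA'
      linarith
    · -- no unselected positive items at all: contradicts total weight > 1
      push_neg at hUB
      have hUB' : ∀ j, j ∉ xKS.2 → b j = 0 := fun j hj =>
        le_antisymm ((hUB j hj)) (hb0 j)
      have ha_all : (∑ i, a i) ≤ sumw a xKS.1 := by
        have := sumw_le_all ha0 hUA' (Finset.univ : Finset (Fin n))
        simpa [sumw] using this
      have hb_all : (∑ j, b j) ≤ sumw b xKS.2 := by
        have := sumw_le_all hb0 hUB' (Finset.univ : Finset (Fin m))
        simpa [sumw] using this
      linarith
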